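/- Let λ/μ be a connected skew diagram with r nonempty rows (a row i is nonempty if (i,j) ∈ λ/μ for some j). Then #{(i,j) ∈ λ/μ : (i+1,j) ∈ λ/μ} = #{(i,j) ∈ λ/μ : (i+1,j+1) ∈ λ/μ} + r − 1. -/

import Mathlib

/-!
Since `μ` is a partition, `(i + 1, j + 1) ∈ λ/μ` together with `(i, j) ∈ λ/μ` forces
`(i + 1, j) ∈ λ/μ`; and a vertical pair `(i, j)`, `(i + 1, j)` extends to the southeast unless
`j = λ_{i+1}`. So the difference of the two counts is the number of rows `i` carrying the pair
`(i, λ_{i+1})`, `(i + 1, λ_{i+1})`, i.e. with `μ_i < λ_{i+1}`. A row has such a pair exactly when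
it is joined vertically to the next row, and by connectedness this happens for every nonempty
row except the last one.
-/

open scoped Classical

abbrev Cell := ℤ × ℤ

def IsPartitionList (l : List ℕ) : Prop := l.Pairwise (· ≥ ·) ∧ ∀ x ∈ l, 0 < x

noncomputable def skewCells (lam mu : List ℕ) : Finset Cell :=
  (Finset.Icc (1 : ℤ) (lam.length : ℤ) ×ˢ Finset.Icc (1 : ℤ) ((lam.foldr max 0 : ℕ) : ℤ)).filter
    (fun c => ((mu.getD ((c.1 - 1).toNat) 0 : ℕ) : ℤ) < c.2 ∧
              c.2 ≤ ((lam.getD ((c.1 - 1).toNat) 0 : ℕ) : ℤ))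

/-- Two cells are adjacent if they differ by (0,±1) or (±1,0). -/
def CellAdj (c c' : Cell) : Prop :=
  (c.1 = c'.1 ∧ (c.2 = c'.2 + 1 ∨ c.2 + 1 = c'.2)) ∨
  (c.2 = c'.2 ∧ (c.1 = c'.1 + 1 ∨ c.1 + 1 = c'.1))

/-- A diagram is connected if it is nonempty and any two of its cells are joined by a
path of pairwise-adjacent cells of the diagram. -/
def IsConnectedDiagram (D : Finset Cell) : Prop :=
  D.Nonempty ∧ ∀ c ∈ D, ∀ c' ∈ D,
    Relation.ReflTransGen (fun a b => b ∈ D ∧ CellAdj a b) c c'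

open Finset

/-- The `i`-th part of `l`, rows being numbered from `1`: it is `0` for `i > l.length` and, through
`Int.toNat`, the first part for `i ≤ 0`. -/
def rowLen (l : List ℕ) (i : ℤ) : ℤ := (l.getD (i - 1).toNat 0 : ℕ)

def cellsWithSouth (D : Finset Cell) : Finset Cell :=
  D.filter fun c => ((c.1 + 1, c.2) : Cell) ∈ D

def cellsWithSoutheast (D : Finset Cell) : Finset Cell :=
  D.filter fun c => ((c.1 + 1, c.2 + 1) : Cell) ∈ D

theorem Relation.ReflTransGen.exists_step_across {α : Type*} {r : α → α → Prop} {p : α → Prop}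
    {a b : α} (h : Relation.ReflTransGen r a b) (ha : p a) (hb : ¬ p b) :
    ∃ x y, p x ∧ ¬ p y ∧ r x y := by
  induction h with
  | refl => exact absurd ha hb
  | @tail y z _ hyz ih =>
    by_cases hy : p y
    · exact ⟨y, z, hy, hb, hyz⟩
    · exact ih hy

theorem IsConnectedDiagram.exists_vertical_pair {D : Finset Cell} (hD : IsConnectedDiagram D)
    {a b : Cell} (ha : a ∈ D) (hb : b ∈ D) {i : ℤ} (hai : a.1 ≤ i) (hib : i < b.1) :
    ∃ j, ((i, j) : Cell) ∈ D ∧ ((i + 1, j) : Cell) ∈ D := by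
  obtain ⟨⟨x₁, x₂⟩, ⟨y₁, y₂⟩, ⟨hxD, hxi⟩, hy, hyD, hadj⟩ :=
    (hD.2 a ha b hb).exists_step_across (p := fun c => c ∈ D ∧ c.1 ≤ i) ⟨ha, hai⟩
      fun h => absurd h.2 (not_le.2 hib)
  have hiy : i < y₁ := not_le.1 fun h => hy ⟨hyD, h⟩
  obtain ⟨rfl, rfl, rfl⟩ : x₁ = i ∧ y₁ = i + 1 ∧ y₂ = x₂ := by
    simp only [CellAdj] at hadj hxi; omega
  exact ⟨y₂, hxD, hyD⟩

section Partitions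

variable {l lam mu : List ℕ}

theorem rowLen_nonneg (l : List ℕ) (i : ℤ) : 0 ≤ rowLen l i := Int.natCast_nonneg _

theorem rowLen_of_length_lt {i : ℤ} (h : (l.length : ℤ) < i) : rowLen l i = 0 := by
  rw [rowLen, List.getD_eq_default _ _ (by omega), Nat.cast_zero]

theorem rowLen_succ_le (hl : l.Pairwise (· ≥ ·)) (i : ℤ) : rowLen l (i + 1) ≤ rowLen l i := by
  unfold rowLen
  rcases le_or_gt i 0 with hi | hi
  · rw [show (i + 1 - 1).toNat = (i - 1).toNat by omega]
  rw [show (i + 1 - 1).toNat = (i - 1).toNat + 1 by omega]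
  set k := (i - 1).toNat
  by_cases h : k + 1 < l.length
  · rw [List.getD_eq_getElem _ _ h, List.getD_eq_getElem _ _ (by omega)]
    exact_mod_cast List.pairwise_iff_getElem.1 hl k (k + 1) (by omega) h (by omega)
  · rw [List.getD_eq_default _ _ (by omega), Nat.cast_zero]
    exact Int.natCast_nonneg _

theorem mem_skewCells {c : Cell} :
    c ∈ skewCells lam mu ↔ 1 ≤ c.1 ∧ rowLen mu c.1 < c.2 ∧ c.2 ≤ rowLen lam c.1 := by
  unfold skewCells
  simp only [mem_filter, mem_product, mem_Icc]
  refine ⟨fun h => ⟨h.1.1.1, h.2⟩, fun ⟨h1, hmu, hlam⟩ => ?_⟩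
  have hlen : c.1 ≤ lam.length := by
    by_contra h
    have := rowLen_of_length_lt (l := lam) (not_le.1 h)
    have := rowLen_nonneg mu c.1
    unfold rowLen at *; omega
  have hk : (c.1 - 1).toNat < lam.length := by omega
  have hmax : lam.getD (c.1 - 1).toNat 0 ≤ lam.foldr max 0 :=
    List.le_max_of_le' 0 (by rw [List.getD_eq_getElem _ _ hk]; exact List.getElem_mem hk) le_rfl
  have := rowLen_nonneg mu c.1
  unfold rowLen at *
  exact ⟨⟨⟨h1, hlen⟩, by omega, by omega⟩, hmu, hlam⟩

theorem cellsWithSoutheast_subset (hmu : mu.Pairwise (· ≥ ·)) :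
    cellsWithSoutheast (skewCells lam mu) ⊆ cellsWithSouth (skewCells lam mu) := by
  intro c hc
  simp only [cellsWithSoutheast, cellsWithSouth, mem_filter, mem_skewCells] at hc ⊢
  have := rowLen_succ_le hmu c.1
  omega

theorem mem_cellsWithSouth_sdiff (hlam : lam.Pairwise (· ≥ ·)) (hmu : mu.Pairwise (· ≥ ·))
    {c : Cell} :
    c ∈ cellsWithSouth (skewCells lam mu) \ cellsWithSoutheast (skewCells lam mu) ↔
      1 ≤ c.1 ∧ rowLen mu c.1 < rowLen lam (c.1 + 1) ∧ c.2 = rowLen lam (c.1 + 1) := by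
  simp only [cellsWithSoutheast, cellsWithSouth, mem_sdiff, mem_filter, mem_skewCells]
  have := rowLen_succ_le hlam c.1
  have := rowLen_succ_le hmu c.1
  omega

end Partitions

section Connected

variable {lam mu : List ℕ} (hlam : lam.Pairwise (· ≥ ·)) (hmu : mu.Pairwise (· ≥ ·))
  (hconn : IsConnectedDiagram (skewCells lam mu))
  (hR : ((skewCells lam mu).image Prod.fst).Nonempty)
include hlam hmu hconn

theorem mem_erase_max'_image_fst_skewCells {i : ℤ} :
    i ∈ ((skewCells lam mu).image Prod.fst).erase (((skewCells lam mu).image Prod.fst).max' hR) ↔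
      1 ≤ i ∧ rowLen mu i < rowLen lam (i + 1) := by
  simp only [mem_erase, mem_image]
  constructor
  · rintro ⟨hne, a, ha, rfl⟩
    obtain ⟨b, hb, hbm⟩ := mem_image.1 (max'_mem _ hR)
    have hlt : a.1 < b.1 := hbm ▸ lt_of_le_of_ne (le_max' _ _ (mem_image_of_mem _ ha)) hne
    obtain ⟨j, hij, hi'j⟩ := hconn.exists_vertical_pair ha hb le_rfl hlt
    rw [mem_skewCells] at hij hi'j
    dsimp only at hij hi'j
    exact ⟨hij.1, by omega⟩
  · intro hi
    obtain ⟨hc, hc'⟩ := mem_filter.1 (mem_sdiff.1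
      ((mem_cellsWithSouth_sdiff (c := (i, rowLen lam (i + 1))) hlam hmu).2 ⟨hi.1, hi.2, rfl⟩)).1
    have hi' : i + 1 ≤ _ := le_max' _ _ (mem_image_of_mem Prod.fst hc')
    exact ⟨by omega, _, hc, rfl⟩

theorem cellsWithSouth_sdiff_cellsWithSoutheast_skewCells :
    cellsWithSouth (skewCells lam mu) \ cellsWithSoutheast (skewCells lam mu) =
      (((skewCells lam mu).image Prod.fst).erase
        (((skewCells lam mu).image Prod.fst).max' hR)).image fun i => (i, rowLen lam (i + 1)) := by
  ext ⟨i, j⟩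
  rw [mem_cellsWithSouth_sdiff hlam hmu, mem_image]
  simp only [mem_erase_max'_image_fst_skewCells hlam hmu hconn, Prod.mk.injEq]
  constructor
  · rintro ⟨h1, hlt, rfl⟩
    exact ⟨i, ⟨h1, hlt⟩, rfl, rfl⟩
  · rintro ⟨_, hi, rfl, rfl⟩
    exact ⟨hi.1, hi.2, rfl⟩

end Connected

theorem up_body_card_general (lam mu : List ℕ)
    (hlam : IsPartitionList lam) (hmu : IsPartitionList mu)
    (hconn : IsConnectedDiagram (skewCells lam mu)) :
    (((skewCells lam mu).filter
        (fun c => ((c.1 + 1, c.2) : Cell) ∈ skewCells lam mu)).card : ℤ) =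
      (((skewCells lam mu).filter
        (fun c => ((c.1 + 1, c.2 + 1) : Cell) ∈ skewCells lam mu)).card : ℤ) +
        (((skewCells lam mu).image Prod.fst).card : ℤ) - 1 := by
  have hR : ((skewCells lam mu).image Prod.fst).Nonempty := hconn.1.image _
  have hsplit := card_sdiff_add_card_eq_card (cellsWithSoutheast_subset (lam := lam) hmu.1)
  rw [cellsWithSouth_sdiff_cellsWithSoutheast_skewCells hlam.1 hmu.1 hconn hR,
    card_image_of_injective _ fun _ _ h => congrArg Prod.fst h,
    card_erase_of_mem (max'_mem _ hR)] at hsplit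
  have hpos := hR.card_pos
  unfold cellsWithSouth cellsWithSoutheast at hsplit
  omega

/-- For a connected skew diagram λ/μ with r nonempty rows, the number of cells with a
cell directly below equals the number of cells with a cell diagonally southeast,
plus r − 1. -/
theorem up_body_card (lam mu : List ℕ)
    (hlam : IsPartitionList lam) (hmu : IsPartitionList mu)
    (hml : ∀ i, mu.getD i 0 ≤ lam.getD i 0)
    (hconn : IsConnectedDiagram (skewCells lam mu)) :
    (((skewCells lam mu).filter
        (fun c => ((c.1 + 1, c.2) : Cell) ∈ skewCells lam mu)).card : ℤ) =
      (((skewCells lam mu).filter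
        (fun c => ((c.1 + 1, c.2 + 1) : Cell) ∈ skewCells lam mu)).card : ℤ) +
        (((skewCells lam mu).image Prod.fst).card : ℤ) - 1 :=
  up_body_card_general lam mu hlam hmu hconn
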